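/- (Exact form of Proposition 2: autocovariance of the interpolation process.) On a probability space, suppose x₀ (ℝ^n-valued) and the noise sequences (η_s)_{s≥1} (ℝ^n-valued) and (ε_s)_{s≥1} (ℝ^m-valued) are all square-integrable, with x₀, η₁, η₂, …, ε₁, ε₂, … mutually independent, E[ε_s] = 0 for all s, and x̂₀ ∈ ℝ^n deterministic. Let x_t, y_t, x̂_t, e_t, ζ_t be defined by the (possibly misspecified) model and filter recursions, and assume all these random vectors are square-integrable. Then for every h ≥ 1 and t > h, writing D = C(θ₀) − C(θ), Cov(ζ_t, ζ_{t−h}) = C(θ) Cov(e_t, e_{t−h}) C(θ)ᵀ + C(θ) Cov(e_t, x_{t−h}) Dᵀ + C(θ) Cov(e_t, ε_{t−h}) σ(θ₀)ᵀ + D Cov(x_t, e_{t−h}) C(θ)ᵀ + D Cov(x_t, x_{t−h}) Dᵀ. -/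

import Mathlib

/-!
Substituting the measurement equation into `ζ_t = y_t − d_t(θ) − C(θ) x̂_t` gives
`ζ_t = (d_t(θ₀) − d_t(θ)) + C(θ) e_t + D x_t + σ(θ₀) ε_t`, so by bilinearity `Cov(ζ_t, ζ_{t−h})`
splits into nine terms. Four of them vanish. `Cov(ε_t, ε_{t−h}) = 0` by independence; the state
`x_k` is an affine function of `x₀, η₁, …, η_k`, hence uncorrelated with every `ε_s`; and the
estimate `x̂_k` is an affine function of `x₀`, the `η`'s and `ε₁, …, ε_k`, hence uncorrelated
with `ε_t` for `k < t`. The last two facts follow by induction along the recursions.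
-/

open Matrix MeasureTheory ProbabilityTheory

/-- The `a × b` covariance matrix `Cov(X, Y) = E[(X − E X)(Y − E Y)ᵀ]` of two
square-integrable random vectors. -/
noncomputable def covMatrix {Ω : Type*} [MeasureSpace Ω] {a b : ℕ}
    (X : Ω → Fin a → ℝ) (Y : Ω → Fin b → ℝ) : Matrix (Fin a) (Fin b) ℝ :=
  Matrix.of fun i j => ∫ ω, (X ω i - ∫ ω', X ω' i) * (Y ω j - ∫ ω', Y ω' j)

theorem MeasureTheory.MemLp.const_mulVec {α ι κ : Type*} [Fintype ι] [Fintype κ]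
    {mα : MeasurableSpace α} {μ : Measure α} {p : ENNReal} (M : Matrix κ ι ℝ) {X : α → ι → ℝ}
    (hX : MemLp X p μ) :
    MemLp (fun ω => M *ᵥ X ω) p μ :=
  M.mulVecLin.toContinuousLinearMap.comp_memLp' hX

section Covariance

variable {Ω : Type*} [MeasureSpace Ω] {a b c : ℕ}

theorem covMatrix_apply (X : Ω → Fin a → ℝ) (Y : Ω → Fin b → ℝ) (i : Fin a) (j : Fin b) :
    covMatrix X Y i j = cov[fun ω => X ω i, fun ω => Y ω j] :=
  rfl

theorem transpose_covMatrix (X : Ω → Fin a → ℝ) (Y : Ω → Fin b → ℝ) :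
    (covMatrix X Y)ᵀ = covMatrix Y X := by
  ext i j
  exact covariance_comm _ _

theorem covMatrix_eq_zero_of_indepFun {X : Ω → Fin a → ℝ} {Y : Ω → Fin b → ℝ}
    (h : IndepFun X Y ℙ) (hX : MemLp X 2 ℙ) (hY : MemLp Y 2 ℙ) : covMatrix X Y = 0 := by
  ext i j
  exact (h.comp (measurable_pi_apply i) (measurable_pi_apply j)).covariance_eq_zero
    (hX.eval i) (hY.eval j)

variable [IsProbabilityMeasure (ℙ : Measure Ω)] {X X' : Ω → Fin a → ℝ} {Y : Ω → Fin b → ℝ}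

theorem covMatrix_const_left (v : Fin a → ℝ) (Y : Ω → Fin b → ℝ) :
    covMatrix (fun _ => v) Y = 0 := by
  ext i j
  exact covariance_const_left _

theorem covMatrix_const_add_left (v : Fin a → ℝ) (hX : Integrable X ℙ) (Y : Ω → Fin b → ℝ) :
    covMatrix (fun ω => v + X ω) Y = covMatrix X Y := by
  ext i j
  exact covariance_const_add_left (hX.eval i) _

theorem covMatrix_add_left (hX : MemLp X 2 ℙ) (hX' : MemLp X' 2 ℙ) (hY : MemLp Y 2 ℙ) :
    covMatrix (fun ω => X ω + X' ω) Y = covMatrix X Y + covMatrix X' Y := by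
  ext i j
  exact covariance_add_left (hX.eval i) (hX'.eval i) (hY.eval j)

theorem covMatrix_sub_left (hX : MemLp X 2 ℙ) (hX' : MemLp X' 2 ℙ) (hY : MemLp Y 2 ℙ) :
    covMatrix (fun ω => X ω - X' ω) Y = covMatrix X Y - covMatrix X' Y := by
  ext i j
  exact covariance_sub_left (hX.eval i) (hX'.eval i) (hY.eval j)

theorem covMatrix_mulVec_left (M : Matrix (Fin c) (Fin a) ℝ) (hX : MemLp X 2 ℙ)
    (hY : MemLp Y 2 ℙ) : covMatrix (fun ω => M *ᵥ X ω) Y = M * covMatrix X Y := by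
  ext i j
  simp only [covMatrix_apply, mulVec, dotProduct, mul_apply]
  rw [covariance_fun_sum_left (fun k => (hX.eval k).const_mul (M i k)) (hY.eval j)]
  simp only [covariance_const_mul_left]

variable {a₁ a₂ a₃ : ℕ} {X₁ : Ω → Fin a₁ → ℝ} {X₂ : Ω → Fin a₂ → ℝ} {X₃ : Ω → Fin a₃ → ℝ}

theorem covMatrix_affine_left (v : Fin c → ℝ) (M₁ : Matrix (Fin c) (Fin a₁) ℝ)
    (M₂ : Matrix (Fin c) (Fin a₂) ℝ) (M₃ : Matrix (Fin c) (Fin a₃) ℝ) (hX₁ : MemLp X₁ 2 ℙ)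
    (hX₂ : MemLp X₂ 2 ℙ) (hX₃ : MemLp X₃ 2 ℙ) (hY : MemLp Y 2 ℙ) :
    covMatrix (fun ω => v + M₁ *ᵥ X₁ ω + M₂ *ᵥ X₂ ω + M₃ *ᵥ X₃ ω) Y =
      M₁ * covMatrix X₁ Y + M₂ * covMatrix X₂ Y + M₃ * covMatrix X₃ Y := by
  have hMX₁ := hX₁.const_mulVec M₁
  have hv₁ : MemLp (fun ω => v + M₁ *ᵥ X₁ ω) 2 ℙ := (memLp_const v).add hMX₁
  have hv₁₂ : MemLp (fun ω => v + M₁ *ᵥ X₁ ω + M₂ *ᵥ X₂ ω) 2 ℙ := hv₁.add (hX₂.const_mulVec M₂)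
  rw [covMatrix_add_left hv₁₂ (hX₃.const_mulVec M₃) hY,
    covMatrix_add_left hv₁ (hX₂.const_mulVec M₂) hY,
    covMatrix_const_add_left v (hMX₁.integrable one_le_two), covMatrix_mulVec_left M₁ hX₁ hY,
    covMatrix_mulVec_left M₂ hX₂ hY, covMatrix_mulVec_left M₃ hX₃ hY]

theorem covMatrix_affine_right (v : Fin c → ℝ) (M₁ : Matrix (Fin c) (Fin a₁) ℝ)
    (M₂ : Matrix (Fin c) (Fin a₂) ℝ) (M₃ : Matrix (Fin c) (Fin a₃) ℝ) (hX₁ : MemLp X₁ 2 ℙ)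
    (hX₂ : MemLp X₂ 2 ℙ) (hX₃ : MemLp X₃ 2 ℙ) (hY : MemLp Y 2 ℙ) :
    covMatrix Y (fun ω => v + M₁ *ᵥ X₁ ω + M₂ *ᵥ X₂ ω + M₃ *ᵥ X₃ ω) =
      covMatrix Y X₁ * M₁ᵀ + covMatrix Y X₂ * M₂ᵀ + covMatrix Y X₃ * M₃ᵀ := by
  rw [← transpose_covMatrix, covMatrix_affine_left v M₁ M₂ M₃ hX₁ hX₂ hX₃ hY]
  simp only [transpose_add, transpose_mul, transpose_covMatrix]

theorem covMatrix_affine_eq_of_uncorrelated {n m : ℕ} {e e' x x' : Ω → Fin n → ℝ}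
    {ε ε' : Ω → Fin m → ℝ} (v v' : Fin c → ℝ) (C D : Matrix (Fin c) (Fin n) ℝ)
    (σ₀ : Matrix (Fin c) (Fin m) ℝ) (he : MemLp e 2 ℙ) (hx : MemLp x 2 ℙ) (hε : MemLp ε 2 ℙ)
    (he' : MemLp e' 2 ℙ) (hx' : MemLp x' 2 ℙ) (hε' : MemLp ε' 2 ℙ)
    (hxε' : covMatrix x ε' = 0) (he'ε : covMatrix e' ε = 0) (hx'ε : covMatrix x' ε = 0)
    (hεε' : covMatrix ε ε' = 0) :
    covMatrix (fun ω => v + C *ᵥ e ω + D *ᵥ x ω + σ₀ *ᵥ ε ω)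
        (fun ω => v' + C *ᵥ e' ω + D *ᵥ x' ω + σ₀ *ᵥ ε' ω) =
      C * covMatrix e e' * Cᵀ + C * covMatrix e x' * Dᵀ + C * covMatrix e ε' * σ₀ᵀ
        + D * covMatrix x e' * Cᵀ + D * covMatrix x x' * Dᵀ := by
  have hY : MemLp (fun ω => v' + C *ᵥ e' ω + D *ᵥ x' ω + σ₀ *ᵥ ε' ω) 2 ℙ :=
    (((memLp_const v').add (he'.const_mulVec C)).add (hx'.const_mulVec D)).add
      (hε'.const_mulVec σ₀)
  rw [covMatrix_affine_left v C D σ₀ he hx hε hY, covMatrix_affine_right v' C D σ₀ he' hx' hε' he,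
    covMatrix_affine_right v' C D σ₀ he' hx' hε' hx,
    covMatrix_affine_right v' C D σ₀ he' hx' hε' hε, hxε', ← transpose_covMatrix e' ε, he'ε,
    ← transpose_covMatrix x' ε, hx'ε, hεε']
  simp only [Matrix.mul_add, Matrix.mul_assoc, transpose_zero, Matrix.zero_mul, Matrix.mul_zero,
    add_zero, add_assoc]

end Covariance

section KalmanFilter

variable {n m : ℕ}

theorem interpolation_eq_affine (d₀ d : Fin m → ℝ) (C₀ C : Matrix (Fin m) (Fin n) ℝ)
    (σ₀ : Matrix (Fin m) (Fin m) ℝ) {x xhat e : Fin n → ℝ} {y ε : Fin m → ℝ}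
    (hy : y = d₀ + C₀ *ᵥ x + σ₀ *ᵥ ε) (he : e = x - xhat) :
    y - (d + C *ᵥ xhat) = (d₀ - d) + C *ᵥ e + (C₀ - C) *ᵥ x + σ₀ *ᵥ ε := by
  subst hy he
  simp only [mulVec_sub, sub_mulVec]
  abel

theorem kalman_update_eq_affine (u : Fin n → ℝ) (d₀ d : Fin m → ℝ) (A : Matrix (Fin n) (Fin n) ℝ)
    (C₀ C : Matrix (Fin m) (Fin n) ℝ) (σ₀ : Matrix (Fin m) (Fin m) ℝ)
    (K : Matrix (Fin n) (Fin m) ℝ) {x xhat : Fin n → ℝ} {y ε : Fin m → ℝ}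
    (hy : y = d₀ + C₀ *ᵥ x + σ₀ *ᵥ ε) :
    (1 - K * C) *ᵥ (u + A *ᵥ xhat) + K *ᵥ (y - d) =
      ((1 - K * C) *ᵥ u + K *ᵥ (d₀ - d)) + ((1 - K * C) * A) *ᵥ xhat + (K * C₀) *ᵥ x
        + (K * σ₀) *ᵥ ε := by
  subst hy
  simp only [mulVec_add, mulVec_sub, ← mulVec_mulVec]
  abel

variable {Ω : Type*} [MeasureSpace Ω] [IsProbabilityMeasure (ℙ : Measure Ω)] {l : ℕ}
  {Z : Ω → Fin l → ℝ}

theorem covMatrix_state_eq_zero {x η : ℕ → Ω → Fin n → ℝ} (u : ℕ → Fin n → ℝ)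
    (A β : Matrix (Fin n) (Fin n) ℝ)
    (hx : ∀ k ω, x (k + 1) ω = u (k + 1) + A *ᵥ x k ω + β *ᵥ η (k + 1) ω)
    (hxL2 : ∀ k, MemLp (x k) 2 ℙ) (hηL2 : ∀ s, 1 ≤ s → MemLp (η s) 2 ℙ) (hZ : MemLp Z 2 ℙ)
    (h₀ : covMatrix (x 0) Z = 0) (hη : ∀ s, 1 ≤ s → covMatrix (η s) Z = 0) (k : ℕ) :
    covMatrix (x k) Z = 0 := by
  induction k with
  | zero => exact h₀
  | succ k ih =>
    have hAx := (hxL2 k).const_mulVec A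
    have huAx : MemLp (fun ω => u (k + 1) + A *ᵥ x k ω) 2 ℙ := (memLp_const (u (k + 1))).add hAx
    rw [show x (k + 1) = fun ω => u (k + 1) + A *ᵥ x k ω + β *ᵥ η (k + 1) ω from funext (hx k),
      covMatrix_add_left huAx ((hηL2 _ k.succ_pos).const_mulVec β) hZ,
      covMatrix_const_add_left _ (hAx.integrable one_le_two), covMatrix_mulVec_left A (hxL2 k) hZ,
      covMatrix_mulVec_left β (hηL2 _ k.succ_pos) hZ, ih, hη _ k.succ_pos, Matrix.mul_zero,
      Matrix.mul_zero, add_zero]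

theorem covMatrix_filter_eq_zero {x xhat xhatm : ℕ → Ω → Fin n → ℝ} {y ε : ℕ → Ω → Fin m → ℝ}
    {xhat₀ : Fin n → ℝ} (u : ℕ → Fin n → ℝ) (d₀ d : ℕ → Fin m → ℝ)
    (A : Matrix (Fin n) (Fin n) ℝ) (C₀ C : Matrix (Fin m) (Fin n) ℝ)
    (σ₀ : Matrix (Fin m) (Fin m) ℝ) (K : ℕ → Matrix (Fin n) (Fin m) ℝ)
    (hxhat0 : ∀ ω, xhat 0 ω = xhat₀)
    (hy : ∀ k ω, y (k + 1) ω = d₀ (k + 1) + C₀ *ᵥ x (k + 1) ω + σ₀ *ᵥ ε (k + 1) ω)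
    (hxhatm : ∀ k ω, xhatm (k + 1) ω = u (k + 1) + A *ᵥ xhat k ω)
    (hxhat : ∀ k ω, xhat (k + 1) ω =
      (1 - K (k + 1) * C) *ᵥ xhatm (k + 1) ω + K (k + 1) *ᵥ (y (k + 1) ω - d (k + 1)))
    (hxL2 : ∀ k, MemLp (x k) 2 ℙ) (hxhatL2 : ∀ k, MemLp (xhat k) 2 ℙ)
    (hεL2 : ∀ s, 1 ≤ s → MemLp (ε s) 2 ℙ) (hZ : MemLp Z 2 ℙ)
    (hx : ∀ k, covMatrix (x k) Z = 0) {N : ℕ}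
    (hε : ∀ s, 1 ≤ s → s ≤ N → covMatrix (ε s) Z = 0) (k : ℕ) (hk : k ≤ N) :
    covMatrix (xhat k) Z = 0 := by
  induction k with
  | zero => rw [show xhat 0 = fun _ => xhat₀ from funext hxhat0, covMatrix_const_left]
  | succ k ih =>
    have hupdate : xhat (k + 1) = fun ω =>
        ((1 - K (k + 1) * C) *ᵥ u (k + 1) + K (k + 1) *ᵥ (d₀ (k + 1) - d (k + 1)))
          + ((1 - K (k + 1) * C) * A) *ᵥ xhat k ω + (K (k + 1) * C₀) *ᵥ x (k + 1) ω
          + (K (k + 1) * σ₀) *ᵥ ε (k + 1) ω :=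
      funext fun ω => by rw [hxhat, hxhatm, kalman_update_eq_affine _ _ _ _ _ _ _ _ (hy k ω)]
    rw [hupdate, covMatrix_affine_left _ _ _ _ (hxhatL2 k) (hxL2 _) (hεL2 _ k.succ_pos) hZ,
      ih (by omega), hx, hε _ k.succ_pos hk]
    simp only [Matrix.mul_zero, add_zero]

end KalmanFilter

theorem interpolation_autocovariance_general {Ω : Type*} [MeasureSpace Ω]
    [IsProbabilityMeasure (ℙ : Measure Ω)] {p n m : ℕ}
    (u : ℕ → (Fin p → ℝ) → (Fin n → ℝ)) (d : ℕ → (Fin p → ℝ) → (Fin m → ℝ))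
    (A β : (Fin p → ℝ) → Matrix (Fin n) (Fin n) ℝ)
    (C : (Fin p → ℝ) → Matrix (Fin m) (Fin n) ℝ)
    (σ : (Fin p → ℝ) → Matrix (Fin m) (Fin m) ℝ)
    (θ₀ θ : Fin p → ℝ)
    (K : ℕ → Matrix (Fin n) (Fin m) ℝ)
    -- noises and initial state
    (x₀ : Ω → Fin n → ℝ) (η : ℕ → Ω → Fin n → ℝ) (εv : ℕ → Ω → Fin m → ℝ)
    (xhat₀ : Fin n → ℝ)
    (hx₀L2 : MemLp x₀ 2 ℙ)
    (hηL2 : ∀ s : ℕ, 1 ≤ s → MemLp (η s) 2 ℙ)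
    (hεL2 : ∀ s : ℕ, 1 ≤ s → MemLp (εv s) 2 ℙ)
    -- x₀, η₁, η₂, …, ε₁, ε₂, … are mutually independent
    (hindep : iIndepFun
      (β := fun i : ℕ ⊕ ℕ => Sum.elim (fun _ => Fin n → ℝ) (fun _ => Fin m → ℝ) i)
      (m := fun i => Sum.rec (fun _ => (inferInstance : MeasurableSpace (Fin n → ℝ)))
        (fun _ => (inferInstance : MeasurableSpace (Fin m → ℝ))) i)
      (fun i => Sum.rec (fun l => if l = 0 then x₀ else η l) (fun l => εv (l + 1)) i) ℙ)
    -- model and filter trajectories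
    (x xhat xhatm e : ℕ → Ω → Fin n → ℝ) (y ζ : ℕ → Ω → Fin m → ℝ)
    (hx0 : x 0 = x₀) (hxhat0 : ∀ ω, xhat 0 ω = xhat₀)
    (hx : ∀ t : ℕ, ∀ ω, x (t + 1) ω = u (t + 1) θ₀ + A θ₀ *ᵥ x t ω + β θ₀ *ᵥ η (t + 1) ω)
    (hy : ∀ t : ℕ, ∀ ω, y (t + 1) ω = d (t + 1) θ₀ + C θ₀ *ᵥ x (t + 1) ω + σ θ₀ *ᵥ εv (t + 1) ω)
    (hxhatm : ∀ t : ℕ, ∀ ω, xhatm (t + 1) ω = u (t + 1) θ + A θ *ᵥ xhat t ω)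
    (hxhat : ∀ t : ℕ, ∀ ω, xhat (t + 1) ω =
      (1 - K (t + 1) * C θ) *ᵥ xhatm (t + 1) ω + K (t + 1) *ᵥ (y (t + 1) ω - d (t + 1) θ))
    (he : ∀ t : ℕ, ∀ ω, e t ω = x t ω - xhat t ω)
    (hζ : ∀ t : ℕ, ∀ ω, ζ t ω = y t ω - (d t θ + C θ *ᵥ xhat t ω))
    -- all these random vectors are square-integrable
    (hxL2 : ∀ t : ℕ, MemLp (x t) 2 ℙ)
    (heL2 : ∀ t : ℕ, MemLp (e t) 2 ℙ) :
    ∀ h : ℕ, 1 ≤ h → ∀ t : ℕ, h < t →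
      covMatrix (ζ t) (ζ (t - h)) =
        C θ * covMatrix (e t) (e (t - h)) * (C θ)ᵀ
        + C θ * covMatrix (e t) (x (t - h)) * (C θ₀ - C θ)ᵀ
        + C θ * covMatrix (e t) (εv (t - h)) * (σ θ₀)ᵀ
        + (C θ₀ - C θ) * covMatrix (x t) (e (t - h)) * (C θ)ᵀ
        + (C θ₀ - C θ) * covMatrix (x t) (x (t - h)) * (C θ₀ - C θ)ᵀ := by
  intro h hh t hht
  have ht : 1 ≤ t := by omega
  have hN : 1 ≤ t - h := by omega
  have hεε : ∀ s r, 1 ≤ s → 1 ≤ r → s ≠ r → covMatrix (εv s) (εv r) = 0 := by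
    intro s r hs hr hsr
    obtain ⟨s, rfl⟩ := Nat.exists_eq_add_of_le' hs
    obtain ⟨r, rfl⟩ := Nat.exists_eq_add_of_le' hr
    exact covMatrix_eq_zero_of_indepFun
      (hindep.indepFun (i := .inr s) (j := .inr r) (by simpa using hsr)) (hεL2 _ hs) (hεL2 _ hr)
  have hxε : ∀ k s, 1 ≤ s → covMatrix (x k) (εv s) = 0 := by
    intro k s hs
    obtain ⟨s, rfl⟩ := Nat.exists_eq_add_of_le' hs
    refine covMatrix_state_eq_zero (u · θ₀) (A θ₀) (β θ₀) hx hxL2 hηL2 (hεL2 _ hs) ?_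
      (fun l hl => ?_) k
    · rw [hx0]
      exact covMatrix_eq_zero_of_indepFun
        (hindep.indepFun (i := .inl 0) (j := .inr s) Sum.inl_ne_inr) hx₀L2 (hεL2 _ hs)
    · have hηε := hindep.indepFun (i := .inl l) (j := .inr s) Sum.inl_ne_inr
      simp only [show l ≠ 0 by omega] at hηε
      exact covMatrix_eq_zero_of_indepFun hηε (hηL2 l hl) (hεL2 _ hs)
  have hxhatL2 : ∀ k, MemLp (xhat k) 2 ℙ := fun k => by
    rw [show xhat k = x k - e k from funext fun ω => by rw [Pi.sub_apply, he, sub_sub_cancel]]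
    exact (hxL2 k).sub (heL2 k)
  have heε : covMatrix (e (t - h)) (εv t) = 0 := by
    rw [show e (t - h) = fun ω => x (t - h) ω - xhat (t - h) ω from funext (he _),
      covMatrix_sub_left (hxL2 _) (hxhatL2 _) (hεL2 t ht), hxε _ t ht,
      covMatrix_filter_eq_zero (u · θ) (d · θ₀) (d · θ) (A θ) (C θ₀) (C θ) (σ θ₀) K hxhat0 hy
        hxhatm hxhat hxL2 hxhatL2 hεL2 (hεL2 t ht) (hxε · t ht)
        (fun s hs hsN => hεε s t hs ht (by omega)) _ le_rfl, sub_zero]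
  have hζ_eq : ∀ s, 1 ≤ s → ζ s = fun ω =>
      (d s θ₀ - d s θ) + C θ *ᵥ e s ω + (C θ₀ - C θ) *ᵥ x s ω + σ θ₀ *ᵥ εv s ω := by
    intro s hs
    obtain ⟨s, rfl⟩ := Nat.exists_eq_add_of_le' hs
    exact funext fun ω => (hζ _ ω).trans (interpolation_eq_affine _ _ _ _ _ (hy s ω) (he _ ω))
  rw [hζ_eq t ht, hζ_eq _ hN]
  exact covMatrix_affine_eq_of_uncorrelated _ _ _ _ _ (heL2 t) (hxL2 t) (hεL2 t ht) (heL2 _)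
    (hxL2 _) (hεL2 _ hN) (hxε t _ hN) heε (hxε _ t ht) (hεε t _ ht hN (by omega))

/-- exact form of Proposition 2: autocovariance of the interpolation
process of the misspecified Kalman filter. With `D = C(θ₀) − C(θ)`, for `h ≥ 1`, `t > h`:
`Cov(ζ_t, ζ_{t−h}) = C(θ)Cov(e_t,e_{t−h})C(θ)ᵀ + C(θ)Cov(e_t,x_{t−h})Dᵀ
 + C(θ)Cov(e_t,ε_{t−h})σ(θ₀)ᵀ + D Cov(x_t,e_{t−h})C(θ)ᵀ + D Cov(x_t,x_{t−h})Dᵀ`. -/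
theorem interpolation_autocovariance {Ω : Type*} [MeasureSpace Ω]
    [IsProbabilityMeasure (ℙ : Measure Ω)] {p n m : ℕ}
    (u : ℕ → (Fin p → ℝ) → (Fin n → ℝ)) (d : ℕ → (Fin p → ℝ) → (Fin m → ℝ))
    (A β : (Fin p → ℝ) → Matrix (Fin n) (Fin n) ℝ)
    (C : (Fin p → ℝ) → Matrix (Fin m) (Fin n) ℝ)
    (σ : (Fin p → ℝ) → Matrix (Fin m) (Fin m) ℝ)
    (θ₀ θ : Fin p → ℝ)
    (K : ℕ → Matrix (Fin n) (Fin m) ℝ)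
    -- noises and initial state
    (x₀ : Ω → Fin n → ℝ) (η : ℕ → Ω → Fin n → ℝ) (εv : ℕ → Ω → Fin m → ℝ)
    (xhat₀ : Fin n → ℝ)
    (hx₀L2 : MemLp x₀ 2 ℙ)
    (hηL2 : ∀ s : ℕ, 1 ≤ s → MemLp (η s) 2 ℙ)
    (hεL2 : ∀ s : ℕ, 1 ≤ s → MemLp (εv s) 2 ℙ)
    (hεmean : ∀ s : ℕ, 1 ≤ s → ∀ i, (∫ ω, εv s ω i) = 0)
    -- x₀, η₁, η₂, …, ε₁, ε₂, … are mutually independent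
    (hindep : iIndepFun
      (β := fun i : ℕ ⊕ ℕ => Sum.elim (fun _ => Fin n → ℝ) (fun _ => Fin m → ℝ) i)
      (m := fun i => Sum.rec (fun _ => (inferInstance : MeasurableSpace (Fin n → ℝ)))
        (fun _ => (inferInstance : MeasurableSpace (Fin m → ℝ))) i)
      (fun i => Sum.rec (fun l => if l = 0 then x₀ else η l) (fun l => εv (l + 1)) i) ℙ)
    -- model and filter trajectories
    (x xhat xhatm e : ℕ → Ω → Fin n → ℝ) (y ζ : ℕ → Ω → Fin m → ℝ)
    (hx0 : x 0 = x₀) (hxhat0 : ∀ ω, xhat 0 ω = xhat₀)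
    (hx : ∀ t : ℕ, ∀ ω, x (t + 1) ω = u (t + 1) θ₀ + A θ₀ *ᵥ x t ω + β θ₀ *ᵥ η (t + 1) ω)
    (hy : ∀ t : ℕ, ∀ ω, y (t + 1) ω = d (t + 1) θ₀ + C θ₀ *ᵥ x (t + 1) ω + σ θ₀ *ᵥ εv (t + 1) ω)
    (hxhatm : ∀ t : ℕ, ∀ ω, xhatm (t + 1) ω = u (t + 1) θ + A θ *ᵥ xhat t ω)
    (hxhat : ∀ t : ℕ, ∀ ω, xhat (t + 1) ω =
      (1 - K (t + 1) * C θ) *ᵥ xhatm (t + 1) ω + K (t + 1) *ᵥ (y (t + 1) ω - d (t + 1) θ))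
    (he : ∀ t : ℕ, ∀ ω, e t ω = x t ω - xhat t ω)
    (hζ : ∀ t : ℕ, ∀ ω, ζ t ω = y t ω - (d t θ + C θ *ᵥ xhat t ω))
    -- all these random vectors are square-integrable
    (hxL2 : ∀ t : ℕ, MemLp (x t) 2 ℙ)
    (heL2 : ∀ t : ℕ, MemLp (e t) 2 ℙ)
    (hζL2 : ∀ t : ℕ, 1 ≤ t → MemLp (ζ t) 2 ℙ) :
    ∀ h : ℕ, 1 ≤ h → ∀ t : ℕ, h < t →
      covMatrix (ζ t) (ζ (t - h)) =
        C θ * covMatrix (e t) (e (t - h)) * (C θ)ᵀ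
        + C θ * covMatrix (e t) (x (t - h)) * (C θ₀ - C θ)ᵀ
        + C θ * covMatrix (e t) (εv (t - h)) * (σ θ₀)ᵀ
        + (C θ₀ - C θ) * covMatrix (x t) (e (t - h)) * (C θ)ᵀ
        + (C θ₀ - C θ) * covMatrix (x t) (x (t - h)) * (C θ₀ - C θ)ᵀ :=
  interpolation_autocovariance_general u d A β C σ θ₀ θ K x₀ η εv xhat₀ hx₀L2 hηL2 hεL2 hindep x
    xhat xhatm e y ζ hx0 hxhat0 hx hy hxhatm hxhat he hζ hxL2 heL2
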